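/- arXiv:1903.10853 — 2 statements merged into one kernel-verified Lean document; each statement's English description precedes it below -/
import Mathlib

section
/- For every complex number z = 1 + i·y with y a nonzero real number, the distance |ζ_N(z) − ζ(z)| between the N-th partial sum of the Riemann series and the analytically continued Riemann zeta value at z converges, as N → ∞, to 1/|y|. In other words, the partial sums accumulate on the circle of center ζ(z) and radius 1/|y|. -/
/-!
Comparing `∑ n ^ (-s)` with `∫ t ^ (-s) dt` gives, for `s ≠ 1`,
`ζ_N(s) - (N + 1) ^ (1 - s) / (1 - s) = 1 / (s - 1) + ∑_{n=1}^{N} δ_n(s)` with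
`δ_n(s) = n ^ (-s) - ∫_n^{n+1} t ^ (-s) dt = O(|s| n ^ (-Re s - 1))`.
The series `∑ δ_n` is holomorphic on `Re s > 0`, and equals `ζ(s) - 1 / (s - 1)` for `Re s > 1`,
hence on all of `Re s > 0`, `s ≠ 1` by the identity theorem. So `ζ_N(s) - ζ(s)` is
`(N + 1) ^ (1 - s) / (1 - s) + o(1)`, and on the line `Re s = 1` this main term has constant
modulus `1 / |Im s|`.
-/

open Filter

/-- The `N`-th partial sum of the Riemann series: `ζ_N(z) = ∑_{n=1}^{N} n^{-z}`. -/
noncomputable def zetaPartial (z : ℂ) (N : ℕ) : ℂ :=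
  ∑ n ∈ Finset.Icc 1 N, (n : ℂ) ^ (-z)

open Complex Topology

lemma norm_ofReal_cpow_neg_sub_le {s : ℂ} (hs : -1 ≤ s.re) {a t : ℝ} (ha : 0 < a)
    (ht : t ∈ Set.Icc a (a + 1)) :
    ‖(t : ℂ) ^ (-s) - (a : ℂ) ^ (-s)‖ ≤ ‖s‖ * a ^ (-s.re - 1) := by
  rcases eq_or_ne s 0 with rfl | hs0
  · simp
  set I := Set.Icc a (a + 1)
  have hderiv : ∀ x ∈ I, HasDerivWithinAt (fun y : ℝ => (y : ℂ) ^ (-s))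
      (-s * (x : ℂ) ^ (-s - 1)) I x := fun x hx =>
    (hasDerivAt_ofReal_cpow_const (by linarith [hx.1]) (neg_ne_zero.2 hs0)).hasDerivWithinAt
  have hbound : ∀ x ∈ I, ‖-s * (x : ℂ) ^ (-s - 1)‖ ≤ ‖s‖ * a ^ (-s.re - 1) := by
    intro x hx
    rw [norm_mul, norm_neg, norm_cpow_eq_rpow_re_of_pos (ha.trans_le hx.1)]
    gcongr
    simpa using Real.rpow_le_rpow_of_nonpos ha hx.1 (by linarith)
  calc _ ≤ ‖s‖ * a ^ (-s.re - 1) * ‖t - a‖ :=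
        (convex_Icc a (a + 1)).norm_image_sub_le_of_norm_hasDerivWithin_le hderiv hbound
          ⟨le_rfl, by linarith⟩ ht
    _ ≤ ‖s‖ * a ^ (-s.re - 1) * 1 := by
        gcongr
        rw [Real.norm_of_nonneg (by linarith [ht.1])]
        linarith [ht.2]
    _ = _ := mul_one _

/-- `n ^ (-s) - ∫ t in n..n+1, t ^ (-s)`. -/
noncomputable def zetaDefect (s : ℂ) (n : ℕ) : ℂ :=
  (n : ℂ) ^ (-s) - (((n : ℂ) + 1) ^ (1 - s) - (n : ℂ) ^ (1 - s)) / (1 - s)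

lemma norm_zetaDefect_le {s : ℂ} (hs : -1 ≤ s.re) (hs1 : s ≠ 1) {n : ℕ} (hn : 0 < n) :
    ‖zetaDefect s n‖ ≤ ‖s‖ * (n : ℝ) ^ (-s.re - 1) := by
  have hn' : (0 : ℝ) < n := Nat.cast_pos.2 hn
  have h1s : 1 - s ≠ 0 := sub_ne_zero.2 hs1.symm
  set I := Set.Icc (n : ℝ) (n + 1)
  set h : ℝ → ℂ := fun t => (t : ℂ) ^ (1 - s) / (1 - s) - t * (n : ℂ) ^ (-s)
  have hderiv : ∀ t ∈ I, HasDerivWithinAt h ((t : ℂ) ^ (-s) - (n : ℂ) ^ (-s)) I t := by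
    intro t ht
    have h1 := hasDerivAt_ofReal_cpow_const' (r := -s) (by linarith [ht.1] : t ≠ 0)
      (by simpa [neg_eq_iff_eq_neg] using hs1)
    rw [neg_add_eq_sub] at h1
    have h2 := ofRealCLM.hasDerivAt (x := t) |>.mul_const ((n : ℂ) ^ (-s))
    simp only [ofRealCLM_apply, ofReal_one, one_mul] at h2
    exact (h1.fun_sub h2).hasDerivWithinAt
  have hmvt := (convex_Icc (n : ℝ) (n + 1)).norm_image_sub_le_of_norm_hasDerivWithin_le hderiv
    (fun t ht => by simpa using norm_ofReal_cpow_neg_sub_le hs hn' ht)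
    ⟨by linarith, le_rfl⟩ ⟨le_rfl, by linarith⟩
  have hval : h n - h (n + 1) = zetaDefect s n := by
    simp only [h, zetaDefect]
    push_cast
    field_simp
    ring
  simpa [hval] using hmvt

lemma zetaPartial_eq_sum_range (s : ℂ) (N : ℕ) :
    zetaPartial s N = ∑ k ∈ Finset.range N, ((k + 1 : ℕ) : ℂ) ^ (-s) := by
  rw [zetaPartial, Finset.range_eq_Ico, Finset.sum_Ico_add' (fun n : ℕ => (n : ℂ) ^ (-s)),
    zero_add, Finset.Ico_add_one_right_eq_Icc]

lemma sum_range_zetaDefect_succ (s : ℂ) (N : ℕ) :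
    ∑ k ∈ Finset.range N, zetaDefect s (k + 1) =
      zetaPartial s N - (((N : ℂ) + 1) ^ (1 - s) - 1) / (1 - s) := by
  have htel := Finset.sum_range_sub (fun k : ℕ => ((k : ℂ) + 1) ^ (1 - s)) N
  simp only [Nat.cast_zero, zero_add, one_cpow] at htel
  rw [zetaPartial_eq_sum_range, ← htel, Finset.sum_div, ← Finset.sum_sub_distrib]
  refine Finset.sum_congr rfl fun k _ => ?_
  simp only [zetaDefect]
  push_cast
  ring

lemma summable_natCast_succ_rpow {σ : ℝ} (hσ : σ < -1) :
    Summable fun k : ℕ => ((k + 1 : ℕ) : ℝ) ^ σ :=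
  (summable_nat_add_iff 1).2 (Real.summable_nat_rpow.2 hσ)

lemma summable_zetaDefect_succ {s : ℂ} (hs : 0 < s.re) (hs1 : s ≠ 1) :
    Summable fun k : ℕ => zetaDefect s (k + 1) := by
  refine .of_norm_bounded
    ((summable_natCast_succ_rpow (by linarith : -s.re - 1 < -1)).mul_left ‖s‖) fun k => ?_
  exact_mod_cast norm_zetaDefect_le (by linarith) hs1 k.succ_pos

lemma tendsto_zetaPartial_of_one_lt_re {s : ℂ} (hs : 1 < s.re) :
    Tendsto (zetaPartial s) atTop (𝓝 (riemannZeta s)) := by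
  have hsum : Summable fun n : ℕ => 1 / ((n : ℂ) + 1) ^ s := by
    simpa using (summable_nat_add_iff 1).2 (summable_one_div_nat_cpow.2 hs)
  rw [zeta_eq_tsum_one_div_nat_add_one_cpow hs]
  refine hsum.hasSum.tendsto_sum_nat.congr fun N => ?_
  rw [zetaPartial_eq_sum_range]
  push_cast
  simp [cpow_neg]

lemma tendsto_natCast_add_one_cpow_of_re_neg {w : ℂ} (hw : w.re < 0) :
    Tendsto (fun N : ℕ => ((N : ℂ) + 1) ^ w) atTop (𝓝 0) := by
  rw [tendsto_zero_iff_norm_tendsto_zero]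
  have hnorm (N : ℕ) : ‖((N : ℂ) + 1) ^ w‖ = ((N : ℝ) + 1) ^ w.re := by
    exact_mod_cast norm_natCast_cpow_of_pos N.succ_pos w
  simpa [hnorm, Function.comp_def] using (tendsto_rpow_neg_atTop (neg_pos.2 hw)).comp
    (tendsto_atTop_add_const_right atTop 1 tendsto_natCast_atTop_atTop)

lemma tsum_zetaDefect_succ_of_one_lt_re {s : ℂ} (hs : 1 < s.re) :
    ∑' k, zetaDefect s (k + 1) = riemannZeta s - 1 / (s - 1) := by
  have hs1 : s ≠ 1 := by rintro rfl; simp at hs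
  refine tendsto_nhds_unique (summable_zetaDefect_succ (by linarith) hs1).hasSum.tendsto_sum_nat ?_
  simp only [sum_range_zetaDefect_succ]
  have hpow := tendsto_natCast_add_one_cpow_of_re_neg (w := 1 - s) (by simpa using hs)
  convert (tendsto_zetaPartial_of_one_lt_re hs).sub
    ((hpow.sub_const 1).div_const (1 - s)) using 2
  rw [zero_sub, neg_div, sub_neg_eq_add, ← neg_sub s 1, div_neg, ← sub_eq_add_neg]

lemma differentiableOn_zetaDefect {n : ℕ} (hn : n ≠ 0) :
    DifferentiableOn ℂ (fun s => zetaDefect s n) {1}ᶜ := by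
  have hn' : (n : ℂ) ≠ 0 := Nat.cast_ne_zero.2 hn
  have hn1 : (n : ℂ) + 1 ≠ 0 := by exact_mod_cast n.succ_ne_zero
  intro s hs
  have : (1 : ℂ) - s ≠ 0 := sub_ne_zero.2 (Ne.symm hs)
  refine DifferentiableAt.differentiableWithinAt ?_
  unfold zetaDefect
  fun_prop (disch := first | assumption | exact Or.inl hn' | exact Or.inl hn1)

lemma differentiableAt_tsum_zetaDefect_succ {s : ℂ} (hs : 0 < s.re) (hs1 : s ≠ 1) :
    DifferentiableAt ℂ (fun w => ∑' k, zetaDefect w (k + 1)) s := by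
  set U := {w : ℂ | s.re / 2 < w.re ∧ ‖w‖ < ‖s‖ + 1} \ {1}
  have hU : IsOpen U := ((isOpen_lt continuous_const continuous_re).inter
    (isOpen_lt continuous_norm continuous_const)).sdiff isClosed_singleton
  have hsU : s ∈ U := ⟨⟨by linarith, by linarith⟩, hs1⟩
  refine (differentiableOn_tsum_of_summable_norm
    ((summable_natCast_succ_rpow (by linarith : -(s.re / 2) - 1 < -1)).mul_left (‖s‖ + 1))
    (fun k => (differentiableOn_zetaDefect k.succ_ne_zero).mono (Set.sdiff_subset_compl _ _)) hU
    fun k w hw => ?_).differentiableAt (hU.mem_nhds hsU)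
  refine (norm_zetaDefect_le (by linarith [hw.1.1]) hw.2 k.succ_pos).trans ?_
  gcongr
  exacts [hw.1.2.le, by exact_mod_cast k.succ_pos, hw.1.1.le]

-- the half-plane `0 < re w` slit along `[1, ∞)`
lemma starConvex_halfPlane_inter_one_sub_slitPlane :
    StarConvex ℝ (1 / 2 : ℂ) {w : ℂ | 0 < w.re ∧ 1 - w ∈ slitPlane} := by
  refine ((convex_halfSpace_re_gt 0).starConvex (by norm_num)).inter fun w hw a b ha hb hab => ?_
  have hab' : (a : ℂ) + b = 1 := by exact_mod_cast hab
  have h : 1 - (a • (1 / 2 : ℂ) + b • w) = a • ((1 / 2 : ℝ) : ℂ) + b • (1 - w) := by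
    simp only [real_smul]
    push_cast
    linear_combination -hab'
  change 1 - _ ∈ slitPlane
  rw [h]
  exact starConvex_ofReal_slitPlane (x := 1 / 2) (by norm_num) hw ha hb hab

lemma riemannZeta_eq_tsum_zetaDefect_succ_add {s : ℂ} (hs : 0 < s.re) (hs1 : s ≠ 1) :
    riemannZeta s = ∑' k, zetaDefect s (k + 1) + 1 / (s - 1) := by
  rcases lt_or_ge 1 s.re with h | h
  · rw [tsum_zetaDefect_succ_of_one_lt_re h]
    ring
  set W := {w : ℂ | 0 < w.re ∧ 1 - w ∈ slitPlane}
  have hW : IsOpen W := (isOpen_lt continuous_const continuous_re).inter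
    (isOpen_slitPlane.preimage (continuous_const.sub continuous_id))
  have hW1 : ∀ w ∈ W, w ≠ 1 := by
    rintro w ⟨-, hw⟩ rfl
    exact slitPlane_ne_zero hw (sub_self 1)
  set G := fun w => ∑' k, zetaDefect w (k + 1) + 1 / (w - 1)
  have hζ : AnalyticOnNhd ℂ riemannZeta W := DifferentiableOn.analyticOnNhd
    (fun w hw => (differentiableAt_riemannZeta (hW1 w hw)).differentiableWithinAt) hW
  have hG : AnalyticOnNhd ℂ G W :=
    DifferentiableOn.analyticOnNhd (fun w hw =>
      ((differentiableAt_tsum_zetaDefect_succ hw.1 (hW1 w hw)).add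
        ((differentiableAt_const 1).div (differentiableAt_id.sub_const 1)
          (sub_ne_zero.2 (hW1 w hw)))).differentiableWithinAt) hW
  have hbase : 2 + I ∈ W := by simp [W, mem_slitPlane_iff]
  have heq : riemannZeta =ᶠ[𝓝 (2 + I)] G := by
    filter_upwards [(isOpen_lt continuous_const continuous_re).mem_nhds
      (show (1 : ℝ) < (2 + I).re by simp)] with w hw
    simp only [G, tsum_zetaDefect_succ_of_one_lt_re hw]
    ring
  have hWconn : IsPreconnected W :=
    (starConvex_halfPlane_inter_one_sub_slitPlane.isPathConnected
      ⟨by norm_num, by norm_num [mem_slitPlane_iff]⟩).isConnected.isPreconnected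
  refine hζ.eqOn_of_preconnected_of_eventuallyEq hG hWconn hbase heq ⟨hs, ?_⟩
  rw [mem_slitPlane_iff, sub_re, one_re, sub_im, one_im]
  by_contra! hc
  exact hs1 (Complex.ext (by rw [one_re]; linarith [hc.1]) (by simpa using hc.2))

lemma tendsto_zetaPartial_sub_cpow_div {s : ℂ} (hs : 0 < s.re) (hs1 : s ≠ 1) :
    Tendsto (fun N : ℕ => zetaPartial s N - ((N : ℂ) + 1) ^ (1 - s) / (1 - s)) atTop
      (𝓝 (riemannZeta s)) := by
  rw [riemannZeta_eq_tsum_zetaDefect_succ_add hs hs1]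
  refine ((summable_zetaDefect_succ hs hs1).hasSum.tendsto_sum_nat.add_const
    (1 / (s - 1))).congr fun N => ?_
  rw [sum_range_zetaDefect_succ, ← neg_sub 1 s, div_neg]
  ring

lemma norm_natCast_add_one_cpow_div_one_sub {s : ℂ} (hs : s.re = 1) (N : ℕ) :
    ‖((N : ℂ) + 1) ^ (1 - s) / (1 - s)‖ = 1 / |s.im| := by
  have hre : (1 - s).re = 0 := by simp [hs]
  rw [norm_div, ← Nat.cast_succ, norm_natCast_cpow_of_pos N.succ_pos, hre, Real.rpow_zero,
    ← re_add_im (1 - s), hre]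
  simp

lemma tendsto_norm_of_tendsto_sub_of_tendsto_norm {ι E : Type*} [SeminormedAddCommGroup E]
    {l : Filter ι} {u v : ι → E} {r : ℝ} (huv : Tendsto (fun i => u i - v i) l (𝓝 0))
    (hv : Tendsto (fun i => ‖v i‖) l (𝓝 r)) : Tendsto (fun i => ‖u i‖) l (𝓝 r) := by
  have h : Tendsto (fun i => ‖u i‖ - ‖v i‖) l (𝓝 0) :=
    squeeze_zero_norm (fun i => abs_norm_sub_norm_le (u i) (v i))
      (tendsto_zero_iff_norm_tendsto_zero.1 huv)
  simpa using h.add hv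

/-- Asymptotic circle: for `z = 1 + i·y` with `y ≠ 0`, the distance between the `N`-th
partial sum of the Riemann series and the analytically continued Riemann zeta value at `z`
converges to `1/|y|`: the partial sums accumulate on the circle of center `ζ(z)` and
radius `1/|Im z|`. -/
theorem abs_zetaPartial_sub_riemannZeta_tendsto (z : ℂ) (hx : z.re = 1) (hy : z.im ≠ 0) :
    Tendsto (fun N : ℕ => ‖zetaPartial z N - riemannZeta z‖)
      atTop (nhds (1 / |z.im|)) := by
  have hz1 : z ≠ 1 := by rintro rfl; simp at hy
  refine tendsto_norm_of_tendsto_sub_of_tendsto_norm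
    (v := fun N : ℕ => ((N : ℂ) + 1) ^ (1 - z) / (1 - z)) ?_ ?_
  · have h := (tendsto_zetaPartial_sub_cpow_div (by rw [hx]; exact one_pos) hz1).sub_const
      (riemannZeta z)
    rw [sub_self] at h
    exact h.congr fun N => by ring
  · simp only [norm_natCast_add_one_cpow_div_one_sub hx]
    exact tendsto_const_nhds
end

section
/- Let x > 0 and y ≠ 0 be real numbers, and define d_{x,y}(n) = n · ( y/sin(y·ln((n+1)/n)) − y/((1 + 1/n)^{x} · tan(y·ln((n+2)/(n+1)))) + (1−x)/(1 + 1/n)^{x} ). Then d_{x,y}(n) converges, as the natural number n → ∞, to (x² + y²)/2. -/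
/-!
With `t = 1/n` one has `dFun x y n = T t / t ^ 2`, where `T t` is `t` times the bracket in `dFun`.
Writing `sin u = u * sinc u` and `(1 + t) ^ x = exp (t * (x * (log (1 + t) / t)))`, `T` is built by
sums, products and inverses from `log (1 + c t) / t`, `sinc`, `cos` and `exp`, each of which has an
expansion `a + b t + c t ^ 2 + O(t ^ 3)` near `0`. Such expansions compose like truncated power
series, and the coefficients of `T` come out as `0`, `0` and `(x ^ 2 + y ^ 2) / 2`.
-/

open Filter Asymptotics Topology Real

noncomputable def dFun (x y : ℝ) (n : ℕ) : ℝ :=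
  (n : ℝ) *
    (y / Real.sin (y * Real.log (((n : ℝ) + 1) / (n : ℝ))) -
      y / ((1 + 1 / (n : ℝ)) ^ x *
        Real.tan (y * Real.log (((n : ℝ) + 2) / ((n : ℝ) + 1)))) +
      (1 - x) / (1 + 1 / (n : ℝ)) ^ x)

def HasQuadExpansion (l : Filter ℝ) (f : ℝ → ℝ) (a b c : ℝ) : Prop :=
  (fun t => f t - (a + b * t + c * t ^ 2)) =O[l] (fun t => t ^ 3)

lemma isBigO_pow_mul_of_continuous {l : Filter ℝ} (hl : l ≤ 𝓝 0) (n : ℕ) {p : ℝ → ℝ}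
    (hp : Continuous p) : (fun t => t ^ n * p t) =O[l] (fun t => t ^ n) := by
  simpa using (isBigO_refl (fun t : ℝ => t ^ n) l).mul
    (((hp.tendsto 0).mono_left hl).isBigO_one ℝ)

namespace HasQuadExpansion

variable {l : Filter ℝ} {f g : ℝ → ℝ} {a b c a' b' c' : ℝ}

lemma congr' (h : HasQuadExpansion l f a b c) (hfg : f =ᶠ[l] g) : HasQuadExpansion l g a b c :=
  IsBigO.congr' h (hfg.mono fun t ht => by simp only [ht]) EventuallyEq.rfl

lemma quadratic (a b c : ℝ) : HasQuadExpansion l (fun t => a + b * t + c * t ^ 2) a b c :=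
  (isBigO_zero _ _).congr_left fun t => by ring

lemma const (a : ℝ) : HasQuadExpansion l (fun _ => a) a 0 0 := by
  simpa using quadratic (l := l) a 0 0

lemma id : HasQuadExpansion l (fun t => t) 0 1 0 := by
  simpa using quadratic (l := l) 0 1 0

lemma add (hf : HasQuadExpansion l f a b c) (hg : HasQuadExpansion l g a' b' c') :
    HasQuadExpansion l (fun t => f t + g t) (a + a') (b + b') (c + c') :=
  (IsBigO.add hf hg).congr_left fun t => by ring

lemma sub (hf : HasQuadExpansion l f a b c) (hg : HasQuadExpansion l g a' b' c') :
    HasQuadExpansion l (fun t => f t - g t) (a - a') (b - b') (c - c') :=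
  (IsBigO.sub hf hg).congr_left fun t => by ring

lemma const_mul (hf : HasQuadExpansion l f a b c) (k : ℝ) :
    HasQuadExpansion l (fun t => k * f t) (k * a) (k * b) (k * c) :=
  (IsBigO.const_mul_left hf k).congr_left fun t => by ring

lemma tendsto (hl : l ≤ 𝓝 0) (h : HasQuadExpansion l f a b c) : Tendsto f l (𝓝 a) := by
  have hrem : Tendsto (fun t => f t - (a + b * t + c * t ^ 2)) l (𝓝 0) :=
    IsBigO.trans_tendsto h ((((continuous_pow 3).tendsto' 0 0 (by simp))).mono_left hl)
  have hpoly : Tendsto (fun t : ℝ => a + b * t + c * t ^ 2) l (𝓝 a) :=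
    ((by fun_prop : Continuous fun t : ℝ => a + b * t + c * t ^ 2).tendsto' 0 a (by simp)).mono_left hl
  simpa using hrem.add hpoly

lemma isBigO_sub_const (hl : l ≤ 𝓝 0) (h : HasQuadExpansion l f a b c) :
    (fun t => f t - a) =O[l] (fun t => t) := by
  have hcube : (fun t : ℝ => t ^ 3) =O[l] (fun t => t) := by
    simpa using (isBigO_pow_mul_of_continuous hl 1 (p := fun t => t ^ 2) (by fun_prop)).congr_left
      fun t => by ring
  have hlin : (fun t => b * t + c * t ^ 2) =O[l] (fun t => t) := by
    simpa using (isBigO_pow_mul_of_continuous hl 1 (p := fun t => b + c * t) (by fun_prop)).congr_left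
      (fun t => by ring)
  exact ((IsBigO.trans h hcube).add hlin).congr_left fun t => by ring

lemma mul (hl : l ≤ 𝓝 0) (hf : HasQuadExpansion l f a b c) (hg : HasQuadExpansion l g a' b' c') :
    HasQuadExpansion l (fun t => f t * g t) (a * a') (a * b' + b * a') (a * c' + b * b' + c * a') := by
  have hg_bdd := (hg.tendsto hl).isBigO_one ℝ
  have hP_bdd := ((quadratic (l := l) a b c).tendsto hl).isBigO_one ℝ
  have hcross : (fun t => (a + b * t + c * t ^ 2) * (a' + b' * t + c' * t ^ 2) -
      (a * a' + (a * b' + b * a') * t + (a * c' + b * b' + c * a') * t ^ 2)) =O[l] (fun t => t ^ 3) :=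
    (isBigO_pow_mul_of_continuous hl 3 (p := fun t => b * c' + c * b' + c * c' * t)
      (by fun_prop)).congr_left fun t => by ring
  have h₁ : (fun t => (f t - (a + b * t + c * t ^ 2)) * g t) =O[l] (fun t => t ^ 3) := by
    simpa using IsBigO.mul hf hg_bdd
  have h₂ : (fun t => (a + b * t + c * t ^ 2) * (g t - (a' + b' * t + c' * t ^ 2))) =O[l]
      (fun t => t ^ 3) := by
    simpa using IsBigO.mul hP_bdd hg
  exact ((h₁.add h₂).add hcross).congr_left fun t => by ring

lemma id_mul (hl : l ≤ 𝓝 0) (hf : HasQuadExpansion l f a b c) :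
    HasQuadExpansion l (fun t => t * f t) 0 a b := by
  convert id.mul hl hf using 1 <;> ring

lemma inv (hl : l ≤ 𝓝 0) (hf : HasQuadExpansion l f a b c) (ha : a ≠ 0) :
    HasQuadExpansion l (fun t => (f t)⁻¹) a⁻¹ (-b / a ^ 2) ((b ^ 2 - a * c) / a ^ 3) := by
  set R : ℝ → ℝ := fun t => a⁻¹ + -b / a ^ 2 * t + (b ^ 2 - a * c) / a ^ 3 * t ^ 2
  have hfR : HasQuadExpansion l (fun t => f t * R t) 1 0 0 := by
    convert hf.mul hl (quadratic _ _ _) using 1 <;> field_simp <;> ring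
  have hf_inv_bdd := ((hf.tendsto hl).inv₀ ha).isBigO_one ℝ
  have hf_ne : ∀ᶠ t in l, f t ≠ 0 := (hf.tendsto hl).eventually_ne ha
  refine (IsBigO.mul hf_inv_bdd hfR).neg_left.congr' ?_ (by simp)
  filter_upwards [hf_ne] with t ht
  simp only [R]
  field_simp
  ring

lemma comp {φ : ℝ → ℝ} {φ₀ φ₁ φ₂ : ℝ} (hφ : HasQuadExpansion (𝓝 0) φ φ₀ φ₁ φ₂) (hl : l ≤ 𝓝 0)
    (hg : HasQuadExpansion l g 0 b c) :
    HasQuadExpansion l (fun t => φ (g t)) φ₀ (φ₁ * b) (φ₁ * c + φ₂ * b ^ 2) := by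
  have hrem : HasQuadExpansion l (fun t => φ (g t) - (φ₀ + φ₁ * g t + φ₂ * g t ^ 2)) 0 0 0 := by
    have hg_cube : (fun t => g t ^ 3) =O[l] (fun t => t ^ 3) := by
      simpa using (hg.isBigO_sub_const hl).pow 3
    have := (IsBigO.comp_tendsto hφ (hg.tendsto hl)).trans hg_cube
    simpa [HasQuadExpansion, Function.comp_def] using this
  have hpoly := ((const φ₀).add (hg.const_mul φ₁)).add ((hg.mul hl hg).const_mul φ₂)
  convert hrem.add hpoly using 1
  · ext t; ring
  all_goals ring

lemma tendsto_div_sq (hl : l ≤ 𝓝[≠] 0) (h : HasQuadExpansion l f 0 0 c) :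
    Tendsto (fun t => f t / t ^ 2) l (𝓝 c) := by
  have hne : ∀ᶠ t in l, t ≠ 0 := hl self_mem_nhdsWithin
  have hrem : (fun t => (f t - (0 + 0 * t + c * t ^ 2)) * (t ^ 2)⁻¹) =O[l] (fun t => t) :=
    (IsBigO.mul h (isBigO_refl (fun t : ℝ => (t ^ 2)⁻¹) l)).congr' EventuallyEq.rfl
      (hne.mono fun t ht => by field_simp)
  have := (hrem.trans_tendsto (tendsto_id.mono_left (hl.trans nhdsWithin_le_nhds))).add_const c
  refine (this.congr' ?_).trans (by simp)
  filter_upwards [hne] with t ht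
  field_simp
  ring

end HasQuadExpansion

open HasQuadExpansion

lemma hasQuadExpansion_nhds_zero_of_bound {φ : ℝ → ℝ} {a b c : ℝ} (C : ℝ)
    (h : ∀ s : ℝ, |s| ≤ 1 → |φ s - (a + b * s + c * s ^ 2)| ≤ C * |s| ^ 3) :
    HasQuadExpansion (𝓝 0) φ a b c := by
  refine IsBigO.of_bound C ?_
  filter_upwards [Metric.closedBall_mem_nhds (0 : ℝ) one_pos] with s hs
  rw [Metric.mem_closedBall, dist_zero_right, Real.norm_eq_abs] at hs
  simpa [abs_pow] using h s hs

lemma hasQuadExpansion_exp : HasQuadExpansion (𝓝 0) exp 1 1 (1 / 2) := by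
  refine hasQuadExpansion_nhds_zero_of_bound 1 fun s hs => ?_
  have h := Real.exp_bound hs (n := 3) (by norm_num)
  norm_num [Finset.sum_range_succ, Nat.factorial] at h
  calc _ = |exp s - (1 + s + s ^ 2 / 2)| := by ring_nf
    _ ≤ |s| ^ 3 * (2 / 9) := h
    _ ≤ 1 * |s| ^ 3 := by nlinarith [pow_nonneg (abs_nonneg s) 3]

lemma hasQuadExpansion_cos : HasQuadExpansion (𝓝 0) cos 1 0 (-1 / 2) := by
  refine hasQuadExpansion_nhds_zero_of_bound 1 fun s hs => ?_
  have h3 : |s| ^ 4 ≤ |s| ^ 3 := pow_le_pow_of_le_one (abs_nonneg s) hs (by norm_num)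
  calc _ = |cos s - (1 - s ^ 2 / 2)| := by ring_nf
    _ ≤ |s| ^ 4 * (5 / 96) := Real.cos_bound hs
    _ ≤ 1 * |s| ^ 3 := by nlinarith [pow_nonneg (abs_nonneg s) 4]

lemma hasQuadExpansion_sinc : HasQuadExpansion (𝓝 0) sinc 1 0 (-1 / 6) := by
  refine hasQuadExpansion_nhds_zero_of_bound 1 fun s hs => ?_
  rcases eq_or_ne s 0 with rfl | hs0
  · simp
  have h4 : |s| ^ 4 ≤ |s| ^ 3 := pow_le_pow_of_le_one (abs_nonneg s) hs (by norm_num)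
  have hsinc : sinc s - (1 + 0 * s + -1 / 6 * s ^ 2) = (sin s - (s - s ^ 3 / 6)) / s := by
    rw [sinc_of_ne_zero hs0]
    field_simp
    ring
  rw [hsinc, abs_div, div_le_iff₀ (abs_pos.mpr hs0)]
  calc _ ≤ |s| ^ 5 / 100 := Real.sin_bound hs
    _ ≤ 1 * |s| ^ 3 * |s| := by nlinarith [pow_nonneg (abs_nonneg s) 4, abs_nonneg s]

lemma abs_log_one_add_sub_le {s : ℝ} (hs : |s| ≤ 1 / 2) :
    |log (1 + s) - (s - s ^ 2 / 2 + s ^ 3 / 3)| ≤ 2 * |s| ^ 4 := by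
  have h := Real.abs_log_sub_add_sum_range_le (x := -s) (by rw [abs_neg]; linarith) 3
  norm_num [Finset.sum_range_succ] at h
  calc _ = |-s + s ^ 2 / 2 + (-s) ^ 3 / 3 + log (1 + s)| := by
        congr 1; ring
    _ ≤ |s| ^ 4 / (1 - |s|) := h
    _ ≤ 2 * |s| ^ 4 := by
        rw [div_le_iff₀ (by linarith)]
        nlinarith [pow_nonneg (abs_nonneg s) 4]

lemma hasQuadExpansion_log_one_add_mul_div (c : ℝ) :
    HasQuadExpansion (𝓝[≠] 0) (fun t => log (1 + c * t) / t) c (-c ^ 2 / 2) (c ^ 3 / 3) := by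
  have hsmall : ∀ᶠ t in 𝓝[≠] (0 : ℝ), |c * t| ≤ 1 / 2 := by
    have : Tendsto (fun t : ℝ => |c * t|) (𝓝 0) (𝓝 0) := by
      simpa using ((tendsto_id (x := 𝓝 (0 : ℝ))).const_mul c).abs
    exact nhdsWithin_le_nhds (this.eventually (ge_mem_nhds (by norm_num)))
  refine IsBigO.of_bound (2 * c ^ 4) ?_
  filter_upwards [self_mem_nhdsWithin, hsmall] with t (ht : t ≠ 0) hct
  have hrem : log (1 + c * t) / t - (c + -c ^ 2 / 2 * t + c ^ 3 / 3 * t ^ 2) =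
      (log (1 + c * t) - (c * t - (c * t) ^ 2 / 2 + (c * t) ^ 3 / 3)) / t := by
    field_simp
    ring
  rw [hrem, Real.norm_eq_abs, Real.norm_eq_abs, abs_div, div_le_iff₀ (abs_pos.mpr ht)]
  calc _ ≤ 2 * |c * t| ^ 4 := abs_log_one_add_sub_le hct
    _ = 2 * c ^ 4 * |t ^ 3| * |t| := by
        rw [abs_mul, abs_pow, mul_pow, Even.pow_abs (by decide)]
        ring

lemma mul_sinc (x : ℝ) : x * sinc x = sin x := by
  rcases eq_or_ne x 0 with rfl | hx
  · simp
  · rw [sinc_of_ne_zero hx]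
    field_simp

lemma HasQuadExpansion.sin_mul_self_div {l : Filter ℝ} {h : ℝ → ℝ} {a b c : ℝ}
    (hl : l ≤ 𝓝[≠] 0) (hh : HasQuadExpansion l h a b c) :
    HasQuadExpansion l (fun t => sin (t * h t) / t) a b (c - a ^ 3 / 6) := by
  have hl₀ : l ≤ 𝓝 0 := hl.trans nhdsWithin_le_nhds
  have hsinc := hasQuadExpansion_sinc.comp hl₀ (hh.id_mul hl₀)
  have hne : ∀ᶠ t in l, t ≠ 0 := hl self_mem_nhdsWithin
  convert (hh.mul hl₀ hsinc).congr' (hne.mono fun t ht => ?_) using 1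
  · ring
  · ring
  · ring
  · rw [← mul_sinc (t * h t)]
    field_simp

lemma hasQuadExpansion_mul_dFun_bracket (x y : ℝ) (hy : y ≠ 0) :
    HasQuadExpansion (𝓝[≠] 0)
      (fun t => t * (y / sin (y * log (1 + t)) -
        y / ((1 + t) ^ x * tan (y * log ((1 + 2 * t) / (1 + t)))) + (1 - x) / (1 + t) ^ x))
      0 0 ((x ^ 2 + y ^ 2) / 2) := by
  have hl₀ : 𝓝[≠] (0 : ℝ) ≤ 𝓝 0 := nhdsWithin_le_nhds
  have hℓ₁ := hasQuadExpansion_log_one_add_mul_div 1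
  have hℓ₂ := hasQuadExpansion_log_one_add_mul_div 2
  have hU := (hℓ₁.const_mul y).sin_mul_self_div le_rfl
  have hW := ((hℓ₂.sub hℓ₁).const_mul y).sin_mul_self_div le_rfl
  have hcos := hasQuadExpansion_cos.comp hl₀ (((hℓ₂.sub hℓ₁).const_mul y).id_mul hl₀)
  have hpow := hasQuadExpansion_exp.comp hl₀ ((hℓ₁.const_mul x).id_mul hl₀)
  have hy₁ : y * 1 ≠ 0 := by simpa using hy
  have hy₂ : y * (2 - 1) ≠ 0 := by norm_num [hy]
  have hT₁ := (hU.inv hl₀ hy₁).const_mul y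
  have hT₂ := (((hcos.mul hl₀ (hpow.inv hl₀ one_ne_zero)).mul hl₀ (hW.inv hl₀ hy₂)).const_mul y)
  have hT₃ := ((hpow.inv hl₀ one_ne_zero).id_mul hl₀).const_mul (1 - x)
  have hsmall : ∀ᶠ t in 𝓝[≠] (0 : ℝ), t ∈ Set.Ioo (-1 / 2 : ℝ) (1 / 2) :=
    hl₀ (Ioo_mem_nhds (by norm_num) (by norm_num))
  convert ((hT₁.sub hT₂).add hT₃).congr' ?_ using 1
  rotate_right
  · filter_upwards [self_mem_nhdsWithin, hsmall] with t (ht : t ≠ 0) ⟨ht₁, ht₂⟩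
    have e₁ : t * (y * (log (1 + 1 * t) / t)) = y * log (1 + t) := by
      rw [one_mul]; field_simp
    have e₂ : t * (y * (log (1 + 2 * t) / t - log (1 + 1 * t) / t)) =
        y * log ((1 + 2 * t) / (1 + t)) := by
      rw [one_mul, log_div (by linarith) (by linarith)]; field_simp
    have e₃ : exp (t * (x * (log (1 + 1 * t) / t))) = (1 + t) ^ x := by
      rw [rpow_def_of_pos (by linarith), one_mul]; congr 1; field_simp
    simp only [e₁, e₂, e₃]
    -- no nonvanishing is needed: once `⁻¹` is distributed, both sides have the same monomials
    simp only [tan_eq_sin_div_cos, div_eq_mul_inv, mul_inv, inv_inv]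
    ring
  all_goals field_simp
  all_goals ring

theorem dFun_tendsto_general (x y : ℝ) (hy : y ≠ 0) :
    Tendsto (fun n : ℕ => dFun x y n) atTop (nhds ((x ^ 2 + y ^ 2) / 2)) := by
  have hinv : Tendsto (fun n : ℕ => ((n : ℝ))⁻¹) atTop (𝓝[≠] 0) :=
    (tendsto_inv_atTop_nhdsGT_zero.comp tendsto_natCast_atTop_atTop).mono_right
      (nhdsWithin_mono _ fun _ ht => ne_of_gt ht)
  refine (((hasQuadExpansion_mul_dFun_bracket x y hy).tendsto_div_sq le_rfl).comp hinv).congr' ?_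
  filter_upwards [eventually_ne_atTop 0] with n hn
  have hn' : (n : ℝ) ≠ 0 := Nat.cast_ne_zero.mpr hn
  simp only [Function.comp_apply, dFun, one_div]
  field_simp

/-- For `x > 0` and `y ≠ 0`, `d_{x,y}(n)` converges to `(x² + y²)/2` as `n → ∞`. -/
theorem dFun_tendsto (x y : ℝ) (hx : 0 < x) (hy : y ≠ 0) :
    Tendsto (fun n : ℕ => dFun x y n) atTop (nhds ((x ^ 2 + y ^ 2) / 2)) :=
  dFun_tendsto_general x y hy
end
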